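/- arXiv:2211.08597 — 3 statements merged into one kernel-verified Lean document; each statement's English description precedes it below -/
import Mathlib

section
/- Let H and H_S be symmetric positive semidefinite p×p matrices, let ρ > 0, and let ζ ∈ (0,1). If ‖(H + ρI)^{-1/2}(H_S − H)(H + ρI)^{-1/2}‖ ≤ ζ/(1 + ζ) (operator norm), then (1 − ζ)(H_S + ρI) ⪯ H + ρI ⪯ (1 + ζ)(H_S + ρI). -/
open Matrix

/-- The positive semidefinite square root of a PSD matrix (junk value `0` otherwise). -/
noncomputable def psdSqrt {p : ℕ} (B : Matrix (Fin p) (Fin p) ℝ) :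
    Matrix (Fin p) (Fin p) ℝ := by
  classical exact if h : B.PosSemidef then
    h.1.eigenvectorUnitary.1 * diagonal ((RCLike.ofReal : ℝ → ℝ) ∘ Real.sqrt ∘ h.1.eigenvalues) *
      (star h.1.eigenvectorUnitary : Matrix (Fin p) (Fin p) ℝ) else 0

/-- The inverse square root `B^{-1/2}` of a positive definite matrix `B`. -/
noncomputable def invSqrt {p : ℕ} (B : Matrix (Fin p) (Fin p) ℝ) :
    Matrix (Fin p) (Fin p) ℝ :=
  (psdSqrt B)⁻¹

/-- The Loewner order: `A ⪯ B` iff `B - A` is positive semidefinite. -/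
def LoewnerLE {p : ℕ} (A B : Matrix (Fin p) (Fin p) ℝ) : Prop := (B - A).PosSemidef

/-- The spectral (operator) norm of a matrix: the supremum of `‖Bx‖` over Euclidean
unit vectors `x`. -/
noncomputable def opNorm {m n : Type*} [Fintype m] [Fintype n] (B : Matrix m n ℝ) : ℝ :=
  sSup {r : ℝ | ∃ x : n → ℝ, (∑ j, x j ^ 2) = 1 ∧ r = Real.sqrt (∑ i, (B.mulVec x i) ^ 2)}

/-!
Congruence by the invertible symmetric matrix `T = (H + ρI)^{-1/2}` preserves the Loewner order
and sends `H + ρI` to `I` and `H_S + ρI` to `I + E`, where `E = T (H_S - H) T`. The norm bound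
gives `|xᵀEx| ≤ ζ/(1+ζ) · xᵀx`, so both claims reduce to the scalar inequalities
`(1 - ζ)(1 + e) ≤ 1 ≤ (1 + ζ)(1 + e)` for `|e| ≤ ζ/(1+ζ)`.
-/

section OpNorm

variable {m n : Type*} [Fintype m] [Fintype n]

lemma dotProduct_self_nonneg {R : Type*} [Ring R] [LinearOrder R] [IsStrictOrderedRing R]
    (v : n → R) : 0 ≤ v ⬝ᵥ v :=
  Finset.sum_nonneg fun i _ => mul_self_nonneg (v i)

lemma sq_dotProduct_le (u v : n → ℝ) : (u ⬝ᵥ v) ^ 2 ≤ (u ⬝ᵥ u) * (v ⬝ᵥ v) := by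
  simpa only [dotProduct, sq] using Finset.sum_mul_sq_le_sq_mul_sq Finset.univ u v

lemma opNorm_nonneg (E : Matrix m n ℝ) : 0 ≤ opNorm E :=
  Real.sSup_nonneg fun _ ⟨_, _, hr⟩ => hr ▸ Real.sqrt_nonneg _

lemma opNorm_bddAbove (E : Matrix m n ℝ) :
    BddAbove {r : ℝ | ∃ x : n → ℝ, (∑ j, x j ^ 2) = 1 ∧
      r = Real.sqrt (∑ i, (E *ᵥ x) i ^ 2)} := by
  refine ⟨Real.sqrt (∑ i, ∑ j, E i j ^ 2), ?_⟩
  rintro r ⟨x, hx, rfl⟩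
  refine Real.sqrt_le_sqrt (Finset.sum_le_sum fun i _ => ?_)
  have := Finset.sum_mul_sq_le_sq_mul_sq Finset.univ (E i) x
  rwa [hx, mul_one] at this

lemma mulVec_dotProduct_mulVec_le_of_unit (E : Matrix m n ℝ) {x : n → ℝ} (hx : x ⬝ᵥ x = 1) :
    (E *ᵥ x) ⬝ᵥ (E *ᵥ x) ≤ opNorm E ^ 2 := by
  have hmem : Real.sqrt ((E *ᵥ x) ⬝ᵥ (E *ᵥ x)) ≤ opNorm E := by
    unfold opNorm
    exact le_csSup (opNorm_bddAbove E)
      ⟨x, by simpa only [dotProduct, sq] using hx, by simp only [dotProduct, sq]⟩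
  exact (Real.sqrt_le_left (opNorm_nonneg E)).1 hmem

lemma mulVec_dotProduct_mulVec_le (E : Matrix m n ℝ) (x : n → ℝ) :
    (E *ᵥ x) ⬝ᵥ (E *ᵥ x) ≤ opNorm E ^ 2 * (x ⬝ᵥ x) := by
  rcases eq_or_ne x 0 with rfl | hx
  · simp
  have hxx : 0 < x ⬝ᵥ x :=
    (dotProduct_self_nonneg x).lt_of_ne (Ne.symm (dotProduct_self_eq_zero.not.2 hx))
  set c := Real.sqrt (x ⬝ᵥ x)
  have hc : c ^ 2 = x ⬝ᵥ x := Real.sq_sqrt hxx.le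
  have hc0 : c ≠ 0 := (Real.sqrt_pos.2 hxx).ne'
  have hunit : (c⁻¹ • x) ⬝ᵥ (c⁻¹ • x) = 1 := by
    rw [smul_dotProduct, dotProduct_smul, smul_eq_mul, smul_eq_mul, ← hc]
    field_simp
  have := mulVec_dotProduct_mulVec_le_of_unit E hunit
  rw [mulVec_smul, smul_dotProduct, dotProduct_smul, smul_eq_mul, smul_eq_mul] at this
  field_simp at this
  rwa [← hc, ← div_le_iff₀ (hc ▸ hxx)]

lemma abs_dotProduct_mulVec_le (E : Matrix n n ℝ) (x : n → ℝ) :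
    |x ⬝ᵥ E *ᵥ x| ≤ opNorm E * (x ⬝ᵥ x) := by
  have hxx := dotProduct_self_nonneg x
  refine abs_le_of_sq_le_sq ?_ (mul_nonneg (opNorm_nonneg E) hxx)
  calc (x ⬝ᵥ E *ᵥ x) ^ 2 ≤ (x ⬝ᵥ x) * ((E *ᵥ x) ⬝ᵥ (E *ᵥ x)) := sq_dotProduct_le _ _
    _ ≤ (x ⬝ᵥ x) * (opNorm E ^ 2 * (x ⬝ᵥ x)) :=
      mul_le_mul_of_nonneg_left (mulVec_dotProduct_mulVec_le E x) hxx
    _ = (opNorm E * (x ⬝ᵥ x)) ^ 2 := by ring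

end OpNorm

section Sqrt

variable {p : ℕ} {B : Matrix (Fin p) (Fin p) ℝ}

lemma psdSqrt_eq (hB : B.PosSemidef) :
    psdSqrt B = hB.1.eigenvectorUnitary.1 *
      diagonal ((RCLike.ofReal : ℝ → ℝ) ∘ Real.sqrt ∘ hB.1.eigenvalues) *
      (star hB.1.eigenvectorUnitary : Matrix (Fin p) (Fin p) ℝ) := by
  rw [psdSqrt, dif_pos hB]

lemma Matrix.PosSemidef.psdSqrt_isHermitian (hB : B.PosSemidef) : (psdSqrt B).IsHermitian := by
  rw [psdSqrt_eq hB, star_eq_conjTranspose]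
  exact isHermitian_mul_mul_conjTranspose _ (isHermitian_diagonal _)

lemma Matrix.PosSemidef.psdSqrt_mul_self (hB : B.PosSemidef) : psdSqrt B * psdSqrt B = B := by
  set U : Matrix (Fin p) (Fin p) ℝ := hB.1.eigenvectorUnitary.1
  have hUU : star U * U = 1 := Unitary.coe_star_mul_self _
  have hdiag : diagonal ((RCLike.ofReal : ℝ → ℝ) ∘ Real.sqrt ∘ hB.1.eigenvalues) *
      diagonal ((RCLike.ofReal : ℝ → ℝ) ∘ Real.sqrt ∘ hB.1.eigenvalues) =
      diagonal ((RCLike.ofReal : ℝ → ℝ) ∘ hB.1.eigenvalues) := by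
    rw [diagonal_mul_diagonal]
    congr 1; funext i
    simp [Real.mul_self_sqrt (hB.eigenvalues_nonneg i)]
  have hspec := hB.1.spectral_theorem
  rw [Unitary.conjStarAlgAut_apply] at hspec
  rw [psdSqrt_eq hB]
  conv_rhs => rw [hspec]
  simp only [Matrix.mul_assoc]
  rw [← Matrix.mul_assoc (star U) _ _, hUU, Matrix.one_mul, ← Matrix.mul_assoc _ _ (star U), hdiag]

lemma Matrix.PosDef.isUnit_psdSqrt (hB : B.PosDef) : IsUnit (psdSqrt B) :=
  isUnit_of_mul_isUnit_left (hB.posSemidef.psdSqrt_mul_self ▸ hB.isUnit)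

lemma Matrix.PosDef.isUnit_invSqrt (hB : B.PosDef) : IsUnit (invSqrt B) :=
  isUnit_nonsing_inv_iff.2 hB.isUnit_psdSqrt

lemma Matrix.PosDef.invSqrt_isHermitian (hB : B.PosDef) : (invSqrt B).IsHermitian :=
  (hB.posSemidef.psdSqrt_isHermitian).inv

lemma Matrix.PosDef.invSqrt_mul_mul_invSqrt (hB : B.PosDef) : invSqrt B * B * invSqrt B = 1 := by
  have hdet := (isUnit_iff_isUnit_det _).1 hB.isUnit_psdSqrt
  have hSS := hB.posSemidef.psdSqrt_mul_self
  set S := psdSqrt B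
  change S⁻¹ * B * S⁻¹ = 1
  rw [← hSS, ← Matrix.mul_assoc, Matrix.nonsing_inv_mul _ hdet, Matrix.one_mul,
    Matrix.mul_nonsing_inv _ hdet]

end Sqrt

lemma one_sub_mul_le_and_le_one_add_mul {s q ζ : ℝ} (hζ : 0 < ζ)
    (hq : |q| ≤ ζ / (1 + ζ) * s) : (1 - ζ) * (s + q) ≤ s ∧ s ≤ (1 + ζ) * (s + q) := by
  obtain ⟨hlow, hup⟩ := abs_le.1 hq
  have hscale : ζ / (1 + ζ) * s * (1 + ζ) = ζ * s := by field_simp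
  constructor <;> nlinarith

section Loewner

variable {p : ℕ}

lemma loewnerLE_star_conj_iff {U A B : Matrix (Fin p) (Fin p) ℝ} (hU : IsUnit U) :
    LoewnerLE (star U * A * U) (star U * B * U) ↔ LoewnerLE A B := by
  rw [LoewnerLE, LoewnerLE, ← Matrix.sub_mul, ← Matrix.mul_sub]
  exact hU.posSemidef_star_left_conjugate_iff

lemma loewnerLE_one_add_of_abs_dotProduct_mulVec_le {E : Matrix (Fin p) (Fin p) ℝ} {ζ : ℝ}
    (hE : E.IsHermitian) (hζ : 0 < ζ) (hEζ : ∀ x, |x ⬝ᵥ E *ᵥ x| ≤ ζ / (1 + ζ) * (x ⬝ᵥ x)) :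
    LoewnerLE ((1 - ζ) • (1 + E)) 1 ∧ LoewnerLE 1 ((1 + ζ) • (1 + E)) := by
  have hquad (c : ℝ) (x : Fin p → ℝ) :
      x ⬝ᵥ (c • (1 + E)) *ᵥ x = c * (x ⬝ᵥ x + x ⬝ᵥ E *ᵥ x) := by
    rw [smul_mulVec, add_mulVec, one_mulVec, dotProduct_smul, dotProduct_add, smul_eq_mul]
  have hherm (c : ℝ) : (c • (1 + E)).IsHermitian := (isHermitian_one.add hE).smul (.all c)
  constructor
  · refine .of_dotProduct_mulVec_nonneg (isHermitian_one.sub (hherm _)) fun x => ?_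
    rw [star_trivial, sub_mulVec, dotProduct_sub, one_mulVec, hquad, sub_nonneg]
    exact (one_sub_mul_le_and_le_one_add_mul hζ (hEζ x)).1
  · refine .of_dotProduct_mulVec_nonneg ((hherm _).sub isHermitian_one) fun x => ?_
    rw [star_trivial, sub_mulVec, dotProduct_sub, one_mulVec, hquad, sub_nonneg]
    exact (one_sub_mul_le_and_le_one_add_mul hζ (hEζ x)).2

end Loewner

/-- **From relative spectral-norm closeness to two-sided Loewner bounds.**
If `H, H_S` are symmetric PSD, `ρ > 0`, `ζ ∈ (0,1)`, and
`‖(H+ρI)^{-1/2}(H_S − H)(H+ρI)^{-1/2}‖ ≤ ζ/(1+ζ)`, then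
`(1−ζ)(H_S+ρI) ⪯ H+ρI ⪯ (1+ζ)(H_S+ρI)`. -/
theorem loewner_of_relative_error {p : ℕ} (H HS : Matrix (Fin p) (Fin p) ℝ)
    (hH : H.PosSemidef) (hHS : HS.PosSemidef)
    (ρ ζ : ℝ) (hρ : 0 < ρ) (hζ : ζ ∈ Set.Ioo (0 : ℝ) 1)
    (hnorm : opNorm (invSqrt (H + ρ • 1) * (HS - H) * invSqrt (H + ρ • 1)) ≤ ζ / (1 + ζ)) :
    LoewnerLE ((1 - ζ) • (HS + ρ • 1)) (H + ρ • 1) ∧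
      LoewnerLE (H + ρ • 1) ((1 + ζ) • (HS + ρ • 1)) := by
  have hM : (H + ρ • 1).PosDef := PosDef.posSemidef_add hH (PosDef.one.smul hρ)
  set T := invSqrt (H + ρ • 1)
  have hT : star T = T := hM.invSqrt_isHermitian
  set E := T * (HS - H) * T
  have hE : E.IsHermitian := by
    simpa only [E, ← star_eq_conjTranspose, hT] using
      isHermitian_mul_mul_conjTranspose T (hHS.1.sub hH.1)
  have hconj (c : ℝ) : T * (c • (HS + ρ • 1)) * T = c • (1 + E) := by
    rw [Matrix.mul_smul, Matrix.smul_mul, ← add_sub_cancel H HS, add_right_comm,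
      Matrix.mul_add, Matrix.add_mul, hM.invSqrt_mul_mul_invSqrt]
  have hbound (x : Fin p → ℝ) : |x ⬝ᵥ E *ᵥ x| ≤ ζ / (1 + ζ) * (x ⬝ᵥ x) :=
    (abs_dotProduct_mulVec_le E x).trans
      (mul_le_mul_of_nonneg_right hnorm (dotProduct_self_nonneg x))
  obtain ⟨hlow, hup⟩ := loewnerLE_one_add_of_abs_dotProduct_mulVec_le hE hζ.1 hbound
  have hconj_iff {A B : Matrix (Fin p) (Fin p) ℝ} :
      LoewnerLE (T * A * T) (T * B * T) ↔ LoewnerLE A B := by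
    have hstar := loewnerLE_star_conj_iff (A := A) (B := B) hM.isUnit_invSqrt
    rwa [hT] at hstar
  refine ⟨hconj_iff.1 ?_, hconj_iff.1 ?_⟩
  · rwa [hconj, hM.invSqrt_mul_mul_invSqrt]
  · rwa [hconj, hM.invSqrt_mul_mul_invSqrt]
end

section
/- Let f : ℝ^p → ℝ be convex and differentiable with minimizer w_⋆, let P be a symmetric positive definite p×p matrix, and let ρ, L_P, σ², η > 0. Fix w_k ∈ ℝ^p and let g be a random vector with E[g] = ∇f(w_k) and E‖g‖²_{P^{-1}} ≤ 4L_P·(f(w_k) − f(w_⋆)) + 2σ²/ρ. Define w_{k+1} = w_k − η P^{-1}g. Then E‖w_{k+1} − w_⋆‖²_P ≤ ‖w_k − w_⋆‖²_P − 2η(1 − 2ηL_P)(f(w_k) − f(w_⋆)) + 2η²σ²/ρ. -/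
open Matrix MeasureTheory

noncomputable def gradVec {p : ℕ} (f : (Fin p → ℝ) → ℝ) (w : Fin p → ℝ) : Fin p → ℝ :=
  fun i => fderiv ℝ f w (Pi.single i 1)

/-!
Expanding the square gives
`‖w_k - w⋆ - ηP⁻¹g‖²_P = ‖w_k - w⋆‖²_P - 2η⟪w_k - w⋆, g⟫ + η²‖g‖²_{P⁻¹}`.
In expectation the cross term becomes `⟪w_k - w⋆, ∇f(w_k)⟫`, which the first-order
characterisation of convexity bounds below by `f(w_k) - f(w⋆)`, and the last term is
controlled by the second-moment bound on `g`.
-/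

theorem ConvexOn.apply_sub_le_sub_of_hasFDerivAt {E : Type*} [NormedAddCommGroup E]
    [NormedSpace ℝ E] {s : Set E} {f : E → ℝ} {f' : E →L[ℝ] ℝ} {x y : E}
    (hf : ConvexOn ℝ s f) (hx : x ∈ s) (hy : y ∈ s) (hf' : HasFDerivAt f f' x) :
    f' (y - x) ≤ f y - f x := by
  let ℓ : ℝ →ᵃ[ℝ] E := AffineMap.lineMap x y
  have hline : HasDerivAt (f ∘ ℓ) (f' (y - x)) 0 :=
    hf'.comp_hasDerivAt_of_eq 0 AffineMap.hasDerivAt_lineMap (by simp [ℓ])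
  simpa [ℓ, slope_def_field] using (hf.comp_affineMap ℓ).le_slope_of_hasDerivAt
    (by simpa [ℓ]) (by simpa [ℓ]) one_pos hline

theorem Matrix.dotProduct_mulVec_sub_smul_inv_mulVec {R n : Type*} [CommRing R] [Fintype n]
    [DecidableEq n] {P : Matrix n n R} (hP : P.IsSymm) (hdet : IsUnit P.det)
    (u g : n → R) (η : R) :
    (u - η • P⁻¹ *ᵥ g) ⬝ᵥ P *ᵥ (u - η • P⁻¹ *ᵥ g)
      = u ⬝ᵥ P *ᵥ u - 2 * η * (u ⬝ᵥ g) + η ^ 2 * (g ⬝ᵥ P⁻¹ *ᵥ g) := by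
  have hPw : P *ᵥ P⁻¹ *ᵥ g = g := by
    rw [mulVec_mulVec, mul_nonsing_inv _ hdet, one_mulVec]
  have hwP : (P⁻¹ *ᵥ g) ⬝ᵥ P *ᵥ u = u ⬝ᵥ g := by
    rw [dotProduct_mulVec, ← mulVec_transpose, hP.eq, hPw, dotProduct_comm]
  simp only [sub_dotProduct, mulVec_sub, dotProduct_sub, mulVec_smul, dotProduct_smul,
    smul_dotProduct, hPw, hwP, smul_eq_mul, dotProduct_comm (P⁻¹ *ᵥ g) g]
  ring

section Expectation

variable {ι Ω : Type*} [Fintype ι] [MeasurableSpace Ω] {μ : Measure Ω} {g : Ω → ι → ℝ}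

theorem MeasureTheory.Integrable.const_dotProduct (hg : Integrable g μ) (u : ι → ℝ) :
    Integrable (fun ω => u ⬝ᵥ g ω) μ :=
  integrable_finsetSum _ fun i _ => (hg.eval i).const_mul (u i)

theorem MeasureTheory.integral_const_dotProduct (hg : Integrable g μ) (u : ι → ℝ) :
    ∫ ω, u ⬝ᵥ g ω ∂μ = u ⬝ᵥ ∫ ω, g ω ∂μ := by
  simp only [dotProduct]
  rw [integral_finsetSum _ fun i _ => (hg.eval i).const_mul (u i)]
  simp only [integral_const_mul, eval_integral hg.eval]

theorem integral_dotProduct_mulVec_sub_smul_inv_mulVec [DecidableEq ι] [IsProbabilityMeasure μ]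
    {P : Matrix ι ι ℝ} (hP : P.IsSymm) (hdet : IsUnit P.det) (hg : Integrable g μ)
    (hgP : Integrable (fun ω => g ω ⬝ᵥ P⁻¹ *ᵥ g ω) μ) (u : ι → ℝ) (η : ℝ) :
    ∫ ω, (u - η • P⁻¹ *ᵥ g ω) ⬝ᵥ P *ᵥ (u - η • P⁻¹ *ᵥ g ω) ∂μ
      = u ⬝ᵥ P *ᵥ u - 2 * η * (u ⬝ᵥ ∫ ω, g ω ∂μ) + η ^ 2 * ∫ ω, g ω ⬝ᵥ P⁻¹ *ᵥ g ω ∂μ := by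
  simp_rw [dotProduct_mulVec_sub_smul_inv_mulVec hP hdet]
  have hlin : Integrable (fun ω => 2 * η * (u ⬝ᵥ g ω)) μ := (hg.const_dotProduct u).const_mul _
  have hconst_sub : Integrable (fun ω => u ⬝ᵥ P *ᵥ u - 2 * η * (u ⬝ᵥ g ω)) μ :=
    (integrable_const _).sub hlin
  rw [integral_add hconst_sub (hgP.const_mul _), integral_sub (integrable_const _) hlin,
    integral_const, integral_const_mul, integral_const_mul, integral_const_dotProduct hg]
  simp

end Expectation

theorem fderiv_apply_eq_dotProduct_gradVec {p : ℕ} (f : (Fin p → ℝ) → ℝ) (w v : Fin p → ℝ) :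
    fderiv ℝ f w v = v ⬝ᵥ gradVec f w := by
  conv_lhs => rw [pi_eq_sum_univ' v]
  simp [gradVec, dotProduct]

theorem sketchySGD_one_step_general {p : ℕ}
    (f : (Fin p → ℝ) → ℝ) (hdiff : Differentiable ℝ f)
    (hconv : ConvexOn ℝ Set.univ f)
    (wstar : Fin p → ℝ)
    (P : Matrix (Fin p) (Fin p) ℝ) (hP : P.PosDef)
    (ρ LP σ2 η : ℝ) (hη : 0 < η)
    (wk : Fin p → ℝ)
    {Ω : Type} [MeasurableSpace Ω] (μ : Measure Ω) [IsProbabilityMeasure μ]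
    (g : Ω → Fin p → ℝ) (hgint : Integrable g μ)
    (hg2int : Integrable (fun ω => g ω ⬝ᵥ (P⁻¹).mulVec (g ω)) μ)
    (hmean : (∫ ω, g ω ∂μ) = gradVec f wk)
    (hvar : (∫ ω, g ω ⬝ᵥ (P⁻¹).mulVec (g ω) ∂μ) ≤
      4 * LP * (f wk - f wstar) + 2 * σ2 / ρ) :
    (∫ ω, (wk - η • (P⁻¹).mulVec (g ω) - wstar) ⬝ᵥ
        P.mulVec (wk - η • (P⁻¹).mulVec (g ω) - wstar) ∂μ)
      ≤ (wk - wstar) ⬝ᵥ P.mulVec (wk - wstar)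
        - 2 * η * (1 - 2 * η * LP) * (f wk - f wstar) + 2 * η ^ 2 * σ2 / ρ := by
  have hsymm : P.IsSymm := (by simpa using hP.isHermitian.eq : Pᵀ = P)
  have hdescent : f wk - f wstar ≤ (wk - wstar) ⬝ᵥ gradVec f wk := by
    have h := hconv.apply_sub_le_sub_of_hasFDerivAt (y := wstar) trivial trivial
      (hdiff wk).hasFDerivAt
    rw [fderiv_apply_eq_dotProduct_gradVec, ← neg_sub, neg_dotProduct] at h
    linarith
  simp_rw [sub_right_comm wk _ wstar]
  rw [integral_dotProduct_mulVec_sub_smul_inv_mulVec hsymm hP.det_pos.ne'.isUnit hgint hg2int,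
    hmean]
  linear_combination mul_le_mul_of_nonneg_left hvar (sq_nonneg η)
    + 2 * mul_le_mul_of_nonneg_left hdescent hη.le

/-- **One-step descent bound for preconditioned SGD.**
Let `f` be convex and differentiable with minimizer `w⋆`, `P ≻ 0`, and
`ρ, L_P, σ², η > 0`.  Let `g` be a random vector with `E[g] = ∇f(w_k)` and
`E‖g‖²_{P⁻¹} ≤ 4L_P(f(w_k) − f(w⋆)) + 2σ²/ρ`, and set `w_{k+1} = w_k − ηP⁻¹g`.  Then
`E‖w_{k+1} − w⋆‖²_P ≤ ‖w_k − w⋆‖²_P − 2η(1 − 2ηL_P)(f(w_k) − f(w⋆)) + 2η²σ²/ρ`. -/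
theorem sketchySGD_one_step {p : ℕ}
    (f : (Fin p → ℝ) → ℝ) (hdiff : Differentiable ℝ f)
    (hconv : ConvexOn ℝ Set.univ f)
    (wstar : Fin p → ℝ) (hmin : ∀ w, f wstar ≤ f w)
    (P : Matrix (Fin p) (Fin p) ℝ) (hP : P.PosDef)
    (ρ LP σ2 η : ℝ) (hρ : 0 < ρ) (hLP : 0 < LP) (hσ : 0 < σ2) (hη : 0 < η)
    (wk : Fin p → ℝ)
    {Ω : Type} [MeasurableSpace Ω] (μ : Measure Ω) [IsProbabilityMeasure μ]
    (g : Ω → Fin p → ℝ) (hgmeas : Measurable g) (hgint : Integrable g μ)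
    (hg2int : Integrable (fun ω => g ω ⬝ᵥ (P⁻¹).mulVec (g ω)) μ)
    (hmean : (∫ ω, g ω ∂μ) = gradVec f wk)
    (hvar : (∫ ω, g ω ⬝ᵥ (P⁻¹).mulVec (g ω) ∂μ) ≤
      4 * LP * (f wk - f wstar) + 2 * σ2 / ρ) :
    (∫ ω, (wk - η • (P⁻¹).mulVec (g ω) - wstar) ⬝ᵥ
        P.mulVec (wk - η • (P⁻¹).mulVec (g ω) - wstar) ∂μ)
      ≤ (wk - wstar) ⬝ᵥ P.mulVec (wk - wstar)
        - 2 * η * (1 - 2 * η * LP) * (f wk - f wstar) + 2 * η ^ 2 * σ2 / ρ :=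
  sketchySGD_one_step_general f hdiff hconv wstar P hP ρ LP σ2 η hη wk μ g hgint hg2int hmean hvar
end

section
/- Let f : ℝ^p → ℝ be convex and differentiable with minimizer w_⋆, let ρ, L_P, σ², γ̂_ℓ, ε > 0. Consider a staged stochastic iteration: in each stage s, a symmetric positive definite matrix P^{(s)} satisfies f(w) − f(w_⋆) ≥ (γ̂_ℓ/2)‖w − w_⋆‖²_{P^{(s)}} for all w, and the iterates are w_{k+1}^{(s)} = w_k^{(s)} − η (P^{(s)})^{-1}g_k^{(s)} for k = 0,…,m−1, where conditionally E_k[g_k^{(s)}] = ∇f(w_k^{(s)}) and E_k‖g_k^{(s)}‖²_{(P^{(s)})^{-1}} ≤ 4L_P·(f(w_k^{(s)}) − f(w_⋆)) + 2σ²/ρ; the next stage starts at ŵ^{(s+1)} = (1/m)∑_{k=0}^{m−1}w_k^{(s)}, with w_0^{(1)} = w_0. If η = min{1/(4L_P), ερ/(8σ²)}, m = 16(L_P + 2σ²/(ερ))/γ̂_ℓ, and s = 2·log(2(f(w_0) − f(w_⋆))/ε), then E[f(ŵ^{(s)}) − f(w_⋆)] ≤ ε. -/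
open Matrix MeasureTheory

/-!
Write `‖v‖²_P = vᵀPv`. Within a stage, expanding the update gives
`‖w_{k+1} − w⋆‖²_P = ‖w_k − w⋆‖²_P − 2η⟨w_k − w⋆, g_k⟩ + η²‖g_k‖²_{P⁻¹}`. Conditioning on the
past replaces `g_k` by `∇f(w_k)` in the cross term, which convexity bounds below by
`f(w_k) − f⋆`; the variance bound and `η ≤ 1/(4L_P)`, `η ≤ ερ/(8σ²)` bound the last term, so the
expected potential drops by `η E[f(w_k) − f⋆]` up to `ηε/4`. Summing over the stage, Jensen's
inequality for the averaged restart and preconditioned strong convexity at the start of the stage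
give, because `γ̂_ℓ η m ≥ 4`, that each stage halves the expected gap up to `ε/4`. After `S` stages
the gap is at most `2⁻ˢ (f(w₀) − f⋆) + ε/2 ≤ ε`.
-/

namespace Matrix

variable {n : Type*} [Fintype n] [DecidableEq n] {Q : Matrix n n ℝ}

theorem PosDef.dotProduct_mulVec_sub_smul_inv_mulVec (hQ : Q.PosDef) (η : ℝ) (a b : n → ℝ) :
    (a - η • Q⁻¹ *ᵥ b) ⬝ᵥ Q *ᵥ (a - η • Q⁻¹ *ᵥ b)
      = a ⬝ᵥ Q *ᵥ a - 2 * η * (a ⬝ᵥ b) + η ^ 2 * (b ⬝ᵥ Q⁻¹ *ᵥ b) := by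
  have hdet : IsUnit Q.det := (isUnit_iff_isUnit_det Q).mp hQ.isUnit
  have hQQinv : ∀ v, Q *ᵥ Q⁻¹ *ᵥ v = v := fun v => by
    rw [mulVec_mulVec, mul_nonsing_inv _ hdet, one_mulVec]
  have hsymm : ∀ u v, u ⬝ᵥ Q *ᵥ v = v ⬝ᵥ Q *ᵥ u := fun u v => by
    rw [dotProduct_mulVec, ← mulVec_transpose, dotProduct_comm,
      ← conjTranspose_eq_transpose_of_trivial, hQ.isHermitian.eq]
  have hcross : (Q⁻¹ *ᵥ b) ⬝ᵥ Q *ᵥ a = a ⬝ᵥ b := by rw [hsymm, hQQinv]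
  simp only [mulVec_sub, mulVec_smul, hQQinv, sub_dotProduct, dotProduct_sub, smul_dotProduct,
    dotProduct_smul, hcross, smul_eq_mul, dotProduct_comm (Q⁻¹ *ᵥ b) b]
  ring

theorem PosDef.two_mul_abs_dotProduct_le (hQ : Q.PosDef) (a b : n → ℝ) :
    2 * |a ⬝ᵥ b| ≤ a ⬝ᵥ Q *ᵥ a + b ⬝ᵥ Q⁻¹ *ᵥ b := by
  have hnonneg : ∀ η : ℝ, 0 ≤ a ⬝ᵥ Q *ᵥ a - 2 * η * (a ⬝ᵥ b) + η ^ 2 * (b ⬝ᵥ Q⁻¹ *ᵥ b) :=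
    fun η => hQ.dotProduct_mulVec_sub_smul_inv_mulVec η a b ▸
      hQ.posSemidef.dotProduct_mulVec_nonneg _
  have hplus := hnonneg 1
  have hminus := hnonneg (-1)
  norm_num at hplus hminus
  cases abs_cases (a ⬝ᵥ b) <;> linarith

end Matrix

noncomputable def dotProductCLM (n : Type*) [Fintype n] : (n → ℝ) →L[ℝ] (n → ℝ) →L[ℝ] ℝ :=
  LinearMap.toContinuousLinearMap
    (LinearMap.toContinuousLinearMap.toLinearMap ∘ₗ dotProductBilin ℝ ℝ)

theorem ConvexOn.add_fderiv_sub_le {E : Type*} [NormedAddCommGroup E] [NormedSpace ℝ E]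
    {f : E → ℝ} (hf : ConvexOn ℝ Set.univ f) {x : E} (hx : DifferentiableAt ℝ f x) (y : E) :
    f x + fderiv ℝ f x (y - x) ≤ f y := by
  let ℓ : ℝ →ᵃ[ℝ] E := AffineMap.lineMap x y
  have hline : ConvexOn ℝ Set.univ (f ∘ ℓ) := by simpa using hf.comp_affineMap ℓ
  have hderiv : HasDerivAt (f ∘ ℓ) (fderiv ℝ f x (y - x)) 0 := by
    have hx' : HasFDerivAt f (fderiv ℝ f x) (ℓ 0) := by simpa [ℓ] using hx.hasFDerivAt
    exact hx'.comp_hasDerivAt 0 AffineMap.hasDerivAt_lineMap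
  have hslope := hline.le_slope_of_hasDerivAt (Set.mem_univ 0) (Set.mem_univ 1) zero_lt_one hderiv
  simp only [slope_def_field, Function.comp_apply, ℓ, AffineMap.lineMap_apply_zero,
    AffineMap.lineMap_apply_one, sub_zero, div_one] at hslope
  linarith

section Gradient

variable {p : ℕ} {f : (Fin p → ℝ) → ℝ}

theorem dotProduct_gradVec (x v : Fin p → ℝ) :
    v ⬝ᵥ gradVec f x = fderiv ℝ f x v := by
  rw [← ContinuousLinearMap.coe_coe,
    (fderiv ℝ f x : (Fin p → ℝ) →ₗ[ℝ] ℝ).pi_apply_eq_sum_univ v]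
  refine Finset.sum_congr rfl fun i _ => ?_
  simp only [gradVec, smul_eq_mul, ContinuousLinearMap.coe_coe]
  congr 2
  ext j
  simp [Pi.single_apply, eq_comm]

theorem ConvexOn.sub_le_dotProduct_gradVec (hf : ConvexOn ℝ Set.univ f) {x : Fin p → ℝ}
    (hx : DifferentiableAt ℝ f x) (y : Fin p → ℝ) : f x - f y ≤ (x - y) ⬝ᵥ gradVec f x := by
  have h := hf.add_fderiv_sub_le hx y
  rw [← neg_sub x y, map_neg] at h
  rw [dotProduct_gradVec]
  linarith

end Gradient

section Integrals

variable {Ω : Type*} {m0 : MeasurableSpace Ω} {μ : Measure Ω}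

theorem integral_sub_const [IsProbabilityMeasure μ] {X : Ω → ℝ} (hX : Integrable X μ) (c : ℝ) :
    ∫ ω, (X ω - c) ∂μ = (∫ ω, X ω ∂μ) - c := by
  simp [integral_sub hX (integrable_const c)]

theorem ConvexOn.integral_comp_average_le {E : Type*} [NormedAddCommGroup E] [NormedSpace ℝ E]
    {f : E → ℝ} (hf : ConvexOn ℝ Set.univ f) {m : ℕ} (hm : 0 < m) {x : ℕ → Ω → E} {y : Ω → E}
    (hy : ∀ ω, y ω = (m : ℝ)⁻¹ • ∑ k ∈ Finset.range m, x k ω)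
    (hfy : Integrable (fun ω => f (y ω)) μ) (hfx : ∀ k, Integrable (fun ω => f (x k ω)) μ) :
    ∫ ω, f (y ω) ∂μ ≤ (∑ k ∈ Finset.range m, ∫ ω, f (x k ω) ∂μ) / m := by
  have hweights : ∑ _k ∈ Finset.range m, (m : ℝ)⁻¹ = 1 := by
    simp [Finset.card_range, Nat.cast_ne_zero.mpr hm.ne']
  have hjensen : ∀ ω, f (y ω) ≤ (∑ k ∈ Finset.range m, f (x k ω)) / m := fun ω => by
    have h := hf.map_sum_le (t := Finset.range m) (fun _ _ => by positivity) hweights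
      (fun k _ => Set.mem_univ (x k ω))
    rw [hy, Finset.smul_sum]
    simpa [Finset.mul_sum, div_eq_inv_mul] using h
  rw [← integral_finsetSum _ fun k _ => hfx k, ← integral_div]
  exact integral_mono hfy ((integrable_finsetSum _ fun k _ => hfx k).div_const _) hjensen

variable {n : Type*} [Fintype n]

theorem integrable_dotProduct_mulVec_of_mul_le {Q : Matrix n n ℝ} (hQ : Q.PosSemidef) {c : ℝ}
    (hc : 0 < c) {x : Ω → n → ℝ} (hx : AEStronglyMeasurable x μ) {Y : Ω → ℝ}
    (hY : Integrable Y μ) (hle : ∀ ω, c * (x ω ⬝ᵥ Q *ᵥ x ω) ≤ Y ω) :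
    Integrable (fun ω => x ω ⬝ᵥ Q *ᵥ x ω) μ := by
  have hcont : Continuous fun v : n → ℝ => v ⬝ᵥ Q *ᵥ v := by fun_prop
  refine (hY.const_mul c⁻¹).mono' (hcont.comp_aestronglyMeasurable hx) (ae_of_all _ fun ω => ?_)
  have hnonneg : 0 ≤ x ω ⬝ᵥ Q *ᵥ x ω := by simpa using hQ.dotProduct_mulVec_nonneg (x ω)
  rw [Real.norm_eq_abs, abs_of_nonneg hnonneg, le_inv_mul_iff₀ hc]
  exact hle ω

theorem mul_integral_dotProduct_mulVec_le {Q : Matrix n n ℝ} (hQ : Q.PosSemidef) {c : ℝ}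
    (hc : 0 < c) {x : Ω → n → ℝ} (hx : AEStronglyMeasurable x μ) {Y : Ω → ℝ}
    (hY : Integrable Y μ) (hle : ∀ ω, c * (x ω ⬝ᵥ Q *ᵥ x ω) ≤ Y ω) :
    c * ∫ ω, x ω ⬝ᵥ Q *ᵥ x ω ∂μ ≤ ∫ ω, Y ω ∂μ := by
  rw [← integral_const_mul]
  exact integral_mono ((integrable_dotProduct_mulVec_of_mul_le hQ hc hx hY hle).const_mul c) hY hle

theorem integrable_dotProduct_of_posDef [DecidableEq n] {Q : Matrix n n ℝ} (hQ : Q.PosDef)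
    {a b : Ω → n → ℝ} (ha : AEStronglyMeasurable a μ) (hb : AEStronglyMeasurable b μ)
    (haQ : Integrable (fun ω => a ω ⬝ᵥ Q *ᵥ a ω) μ)
    (hbQ : Integrable (fun ω => b ω ⬝ᵥ Q⁻¹ *ᵥ b ω) μ) :
    Integrable (fun ω => a ω ⬝ᵥ b ω) μ := by
  refine ((haQ.add hbQ).div_const 2).mono'
    ((dotProductCLM n).continuous₂.comp_aestronglyMeasurable₂ ha hb) (ae_of_all _ fun ω => ?_)
  have := hQ.two_mul_abs_dotProduct_le (a ω) (b ω)
  rw [Real.norm_eq_abs, Pi.add_apply]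
  linarith

end Integrals

section ConditionalExpectation

variable {Ω : Type*} {m0 : MeasurableSpace Ω} {μ : Measure Ω} {ℱ : MeasurableSpace Ω}

theorem condExp_dotProduct_of_stronglyMeasurable_left {n : Type*} [Fintype n]
    {a g G : Ω → n → ℝ} (ha : StronglyMeasurable[ℱ] a)
    (hag : Integrable (fun ω => a ω ⬝ᵥ g ω) μ) (hg : Integrable g μ) (hG : μ[g|ℱ] =ᵐ[μ] G) :
    μ[fun ω => a ω ⬝ᵥ g ω|ℱ] =ᵐ[μ] fun ω => a ω ⬝ᵥ G ω := by
  filter_upwards [condExp_bilin_of_stronglyMeasurable_left (dotProductCLM n) ha hag hg, hG]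
    with ω hω hGω
  rw [← hGω]
  exact hω

theorem integral_le_of_condExp_le (hℱ : ℱ ≤ m0) [SigmaFinite (μ.trim hℱ)] {X Y : Ω → ℝ}
    (hY : Integrable Y μ) (hXY : ∀ᵐ ω ∂μ, μ[X|ℱ] ω ≤ Y ω) : ∫ ω, X ω ∂μ ≤ ∫ ω, Y ω ∂μ := by
  rw [← integral_condExp hℱ]
  exact integral_mono_ae integrable_condExp hY hXY

variable [IsProbabilityMeasure μ] {p : ℕ} {f : (Fin p → ℝ) → ℝ}

theorem integral_sub_le_integral_dotProduct_of_condExp_eq_gradVec (hℱ : ℱ ≤ m0)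
    (hdiff : Differentiable ℝ f) (hconv : ConvexOn ℝ Set.univ f) (wstar : Fin p → ℝ)
    {x g : Ω → Fin p → ℝ} (hx : StronglyMeasurable[ℱ] x) (hg : Integrable g μ)
    (hfx : Integrable (fun ω => f (x ω)) μ) (hxg : Integrable (fun ω => (x ω - wstar) ⬝ᵥ g ω) μ)
    (hmean : μ[g|ℱ] =ᵐ[μ] fun ω => gradVec f (x ω)) :
    (∫ ω, f (x ω) ∂μ) - f wstar ≤ ∫ ω, (x ω - wstar) ⬝ᵥ g ω ∂μ := by
  have hcond := condExp_dotProduct_of_stronglyMeasurable_left (a := fun ω => x ω - wstar)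
    (hx.sub stronglyMeasurable_const) hxg hg hmean
  have hconvex : ∀ᵐ ω ∂μ, f (x ω) - f wstar ≤ μ[fun ω => (x ω - wstar) ⬝ᵥ g ω|ℱ] ω := by
    filter_upwards [hcond] with ω hω
    rw [hω]
    exact hconv.sub_le_dotProduct_gradVec (hdiff _) wstar
  calc (∫ ω, f (x ω) ∂μ) - f wstar = ∫ ω, (f (x ω) - f wstar) ∂μ := (integral_sub_const hfx _).symm
    _ ≤ ∫ ω, μ[fun ω => (x ω - wstar) ⬝ᵥ g ω|ℱ] ω ∂μ :=
        integral_mono_ae (hfx.sub (integrable_const _)) integrable_condExp hconvex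
    _ = ∫ ω, (x ω - wstar) ⬝ᵥ g ω ∂μ := integral_condExp hℱ

theorem integral_preconditioned_sgd_step_le (hℱ : ℱ ≤ m0) {Q : Matrix (Fin p) (Fin p) ℝ}
    (hQ : Q.PosDef) (hdiff : Differentiable ℝ f) (hconv : ConvexOn ℝ Set.univ f)
    (wstar : Fin p → ℝ) {η A B : ℝ} (hη : 0 ≤ η) {x x' g : Ω → Fin p → ℝ}
    (hx : StronglyMeasurable[ℱ] x) (hg : Integrable g μ)
    (hg2 : Integrable (fun ω => g ω ⬝ᵥ Q⁻¹ *ᵥ g ω) μ) (hfx : Integrable (fun ω => f (x ω)) μ)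
    (hqx : Integrable (fun ω => (x ω - wstar) ⬝ᵥ Q *ᵥ (x ω - wstar)) μ)
    (hx' : ∀ ω, x' ω = x ω - η • Q⁻¹ *ᵥ g ω)
    (hmean : μ[g|ℱ] =ᵐ[μ] fun ω => gradVec f (x ω))
    (hvar : ∀ᵐ ω ∂μ, μ[fun ω => g ω ⬝ᵥ Q⁻¹ *ᵥ g ω|ℱ] ω ≤ A * (f (x ω) - f wstar) + B) :
    ∫ ω, (x' ω - wstar) ⬝ᵥ Q *ᵥ (x' ω - wstar) ∂μ
      ≤ ∫ ω, (x ω - wstar) ⬝ᵥ Q *ᵥ (x ω - wstar) ∂μ - 2 * η * ((∫ ω, f (x ω) ∂μ) - f wstar)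
        + η ^ 2 * (A * ((∫ ω, f (x ω) ∂μ) - f wstar) + B) := by
  have hxg : Integrable (fun ω => (x ω - wstar) ⬝ᵥ g ω) μ :=
    integrable_dotProduct_of_posDef hQ
      ((hx.mono hℱ).aestronglyMeasurable.sub aestronglyMeasurable_const) hg.1 hqx hg2
  have hcross := integral_sub_le_integral_dotProduct_of_condExp_eq_gradVec hℱ hdiff hconv wstar
    hx hg hfx hxg hmean
  have hmoment : ∫ ω, g ω ⬝ᵥ Q⁻¹ *ᵥ g ω ∂μ ≤ A * ((∫ ω, f (x ω) ∂μ) - f wstar) + B := by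
    have hgap : Integrable (fun ω => A * (f (x ω) - f wstar)) μ :=
      (hfx.sub (integrable_const _)).const_mul A
    have hbound : Integrable (fun ω => A * (f (x ω) - f wstar) + B) μ :=
      hgap.add (integrable_const B)
    refine (integral_le_of_condExp_le hℱ hbound hvar).trans_eq ?_
    rw [integral_add hgap (integrable_const B), integral_const_mul, integral_sub_const hfx]
    simp
  have hexpand : ∫ ω, (x' ω - wstar) ⬝ᵥ Q *ᵥ (x' ω - wstar) ∂μ
      = ∫ ω, (x ω - wstar) ⬝ᵥ Q *ᵥ (x ω - wstar) ∂μ - 2 * η * ∫ ω, (x ω - wstar) ⬝ᵥ g ω ∂μ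
        + η ^ 2 * ∫ ω, g ω ⬝ᵥ Q⁻¹ *ᵥ g ω ∂μ := by
    have hpt : ∀ ω, (x' ω - wstar) ⬝ᵥ Q *ᵥ (x' ω - wstar)
        = (x ω - wstar) ⬝ᵥ Q *ᵥ (x ω - wstar) - 2 * η * ((x ω - wstar) ⬝ᵥ g ω)
          + η ^ 2 * (g ω ⬝ᵥ Q⁻¹ *ᵥ g ω) := fun ω => by
      rw [hx', sub_right_comm]
      exact hQ.dotProduct_mulVec_sub_smul_inv_mulVec η _ _
    simp_rw [hpt]
    rw [integral_add ?_ (hg2.const_mul _), integral_sub hqx (hxg.const_mul _),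
      integral_const_mul, integral_const_mul]
    exact hqx.sub (hxg.const_mul _)
  rw [hexpand]
  gcongr

end ConditionalExpectation

theorem gap_le_half_add_of_descent {η γ δ c Vnext : ℝ} {m : ℕ} {C V : ℕ → ℝ}
    (hm : 0 < m) (hη : 0 < η) (hγ : 0 < γ) (hγηm : 4 ≤ γ * η * m) (hC : ∀ k, 0 ≤ C k)
    (hdesc : ∀ k < m, C (k + 1) ≤ C k - η * (V k - c) + η * δ)
    (hC0 : γ / 2 * C 0 ≤ V 0 - c) (hnext : Vnext ≤ (∑ k ∈ Finset.range m, V k) / m) :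
    Vnext - c ≤ (V 0 - c) / 2 + δ := by
  have hmpos : (0 : ℝ) < m := Nat.cast_pos.mpr hm
  have htelescope : η * ∑ k ∈ Finset.range m, (V k - c) ≤ C 0 - C m + m * (η * δ) := by
    have h : ∑ k ∈ Finset.range m, (η * (V k - c) - η * δ)
        ≤ ∑ k ∈ Finset.range m, (C k - C (k + 1)) :=
      Finset.sum_le_sum fun k hk => by linarith [hdesc k (Finset.mem_range.mp hk)]
    rw [Finset.sum_range_sub', Finset.sum_sub_distrib, ← Finset.mul_sum, Finset.sum_const,
      Finset.card_range, nsmul_eq_mul] at h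
    linarith
  have haverage : m * (Vnext - c) ≤ ∑ k ∈ Finset.range m, (V k - c) := by
    rw [Finset.sum_sub_distrib, Finset.sum_const, Finset.card_range, nsmul_eq_mul, mul_sub]
    rw [le_div_iff₀ hmpos] at hnext
    linarith
  have hC0' : C 0 ≤ m * η / 2 * (V 0 - c) := by
    have hgap : 0 ≤ V 0 - c := (mul_nonneg (by positivity) (hC 0)).trans hC0
    have : γ * C 0 ≤ γ * (m * η / 2 * (V 0 - c)) := by
      nlinarith [mul_le_mul_of_nonneg_right hγηm hgap]
    exact le_of_mul_le_mul_left this hγ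
  have : m * η * (Vnext - c) ≤ m * η * ((V 0 - c) / 2 + δ) := by
    nlinarith [hC m]
  exact le_of_mul_le_mul_left this (by positivity)

theorem le_of_le_half_add_of_log_le {D : ℕ → ℝ} {ε : ℝ} {S : ℕ} (hε : 0 < ε) (hD0 : 0 ≤ D 0)
    (hD : ∀ s, D (s + 1) ≤ D s / 2 + ε / 4) (hS : 2 * Real.log (2 * D 0 / ε) ≤ S) : D S ≤ ε := by
  have hgeom : ∀ n, D n ≤ D 0 / 2 ^ n + ε / 2 := by
    intro n
    induction n with
    | zero => simp only [pow_zero, div_one]; linarith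
    | succ n ih =>
      calc D (n + 1) ≤ (D 0 / 2 ^ n + ε / 2) / 2 + ε / 4 := by linarith [hD n]
        _ = D 0 / 2 ^ (n + 1) + ε / 2 := by ring
  have hpow : 2 * D 0 / ε ≤ 2 ^ S := by
    rcases hD0.eq_or_lt with h0 | hpos
    · simp [← h0]
    have hlog2 : 1 / 2 < Real.log 2 := by linarith [Real.log_two_gt_d9]
    rw [← Real.log_le_log_iff (by positivity) (by positivity), Real.log_pow]
    nlinarith [Nat.cast_nonneg (α := ℝ) S]
  have : D 0 / 2 ^ S ≤ ε / 2 := by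
    rw [div_le_iff₀ (by positivity)]
    rw [div_le_iff₀ hε] at hpow
    linarith
  linarith [hgeom S]

section StepSize

variable {ρ L σ2 γ ε η : ℝ}

theorem stepSize_pos (hρ : 0 < ρ) (hL : 0 < L) (hσ : 0 < σ2) (hε : 0 < ε)
    (hη : η = min (1 / (4 * L)) (ε * ρ / (8 * σ2))) : 0 < η :=
  hη ▸ lt_min (by positivity) (by positivity)

theorem stepSize_mul_le_one (hL : 0 < L) (hη : η = min (1 / (4 * L)) (ε * ρ / (8 * σ2))) :
    η * (4 * L) ≤ 1 := by
  have h : η ≤ 1 / (4 * L) := hη ▸ min_le_left _ _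
  rwa [le_div_iff₀ (by positivity)] at h

theorem stepSize_mul_noise_le (hρ : 0 < ρ) (hσ : 0 < σ2)
    (hη : η = min (1 / (4 * L)) (ε * ρ / (8 * σ2))) : η * (2 * σ2 / ρ) ≤ ε / 4 := by
  have h : η ≤ ε * ρ / (8 * σ2) := hη ▸ min_le_right _ _
  calc η * (2 * σ2 / ρ) ≤ ε * ρ / (8 * σ2) * (2 * σ2 / ρ) := by gcongr
    _ = ε / 4 := by field_simp; ring

theorem four_le_mul_stepSize_mul {m : ℕ} (hρ : 0 < ρ) (hL : 0 < L) (hσ : 0 < σ2) (hγ : 0 < γ)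
    (hε : 0 < ε) (hη : η = min (1 / (4 * L)) (ε * ρ / (8 * σ2)))
    (hm : (m : ℝ) ≥ 16 * (L + 2 * σ2 / (ε * ρ)) / γ) : 4 ≤ γ * η * m := by
  have hinv : 1 ≤ η * (4 * L + 8 * σ2 / (ε * ρ)) := by
    rcases min_choice (1 / (4 * L)) (ε * ρ / (8 * σ2)) with h | h <;> rw [hη, h, mul_add]
    · have : 1 / (4 * L) * (4 * L) = 1 := by field_simp
      have : 0 ≤ 1 / (4 * L) * (8 * σ2 / (ε * ρ)) := by positivity
      linarith
    · have : ε * ρ / (8 * σ2) * (8 * σ2 / (ε * ρ)) = 1 := by field_simp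
      have : 0 ≤ ε * ρ / (8 * σ2) * (4 * L) := by positivity
      linarith
  have hγm : 4 * (4 * L + 8 * σ2 / (ε * ρ)) ≤ γ * m := by
    rw [ge_iff_le, div_le_iff₀' hγ] at hm
    linarith [show 8 * σ2 / (ε * ρ) = 4 * (2 * σ2 / (ε * ρ)) by ring]
  nlinarith [mul_le_mul_of_nonneg_left hγm (stepSize_pos hρ hL hσ hε hη).le]

end StepSize

theorem sketchySGD_strongly_convex_convergence_general {p : ℕ}
    (f : (Fin p → ℝ) → ℝ) (hdiff : Differentiable ℝ f)
    (hconv : ConvexOn ℝ Set.univ f)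
    (wstar : Fin p → ℝ) (hmin : ∀ w, f wstar ≤ f w)
    (ρ LP σ2 γℓ ε : ℝ) (hρ : 0 < ρ) (hLP : 0 < LP) (hσ : 0 < σ2)
    (hγ : 0 < γℓ) (hε : 0 < ε)
    (P : ℕ → Matrix (Fin p) (Fin p) ℝ) (hP : ∀ s, (P s).PosDef)
    (hlow : ∀ (s : ℕ) (w : Fin p → ℝ),
      f w - f wstar ≥ γℓ / 2 * ((w - wstar) ⬝ᵥ (P s).mulVec (w - wstar)))
    (m S : ℕ) (hm : 0 < m)
    (hm' : (m : ℝ) ≥ 16 * (LP + 2 * σ2 / (ε * ρ)) / γℓ)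
    {Ω : Type} {m0 : MeasurableSpace Ω} (μ : Measure Ω) [IsProbabilityMeasure μ]
    (ℱ : ℕ → MeasurableSpace Ω) (hℱ : ∀ t, ℱ t ≤ m0)
    (w g : ℕ → ℕ → Ω → Fin p → ℝ)
    (w0 : Fin p → ℝ) (hw0 : w 0 0 = fun _ => w0)
    (hSlog : (S : ℝ) ≥ 2 * Real.log (2 * (f w0 - f wstar) / ε))
    (hadapt : ∀ s k, StronglyMeasurable[ℱ (s * m + k)] (w s k))
    (hgint : ∀ s k, Integrable (g s k) μ)
    (hg2int : ∀ s k,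
      Integrable (fun ω => g s k ω ⬝ᵥ ((P s)⁻¹).mulVec (g s k ω)) μ)
    (hfint : ∀ s k, Integrable (fun ω => f (w s k ω)) μ)
    (η : ℝ) (hη : η = min (1 / (4 * LP)) (ε * ρ / (8 * σ2)))
    (hupd : ∀ s k ω, w s (k + 1) ω = w s k ω - η • ((P s)⁻¹).mulVec (g s k ω))
    (hstage : ∀ s ω, w (s + 1) 0 ω = (m : ℝ)⁻¹ • ∑ k ∈ Finset.range m, w s k ω)
    (hmean : ∀ s k, μ[g s k|ℱ (s * m + k)] =ᵐ[μ] fun ω => gradVec f (w s k ω))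
    (hvar : ∀ s k, ∀ᵐ ω ∂μ,
      (μ[fun ω' => g s k ω' ⬝ᵥ ((P s)⁻¹).mulVec (g s k ω')|ℱ (s * m + k)]) ω
        ≤ 4 * LP * (f (w s k ω) - f wstar) + 2 * σ2 / ρ) :
    (∫ ω, f (w S 0 ω) ∂μ) - f wstar ≤ ε := by
  have hη0 : 0 < η := stepSize_pos hρ hLP hσ hε hη
  have hfgap : ∀ s k, Integrable (fun ω => f (w s k ω) - f wstar) μ :=
    fun s k => (hfint s k).sub (integrable_const _)
  have hgap : ∀ s k, 0 ≤ (∫ ω, f (w s k ω) ∂μ) - f wstar := fun s k =>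
    integral_sub_const (hfint s k) _ ▸ integral_nonneg fun ω => sub_nonneg.2 (hmin _)
  have hdist : ∀ s k, AEStronglyMeasurable (fun ω => w s k ω - wstar) μ := fun s k =>
    (((hadapt s k).mono (hℱ _)).sub stronglyMeasurable_const).aestronglyMeasurable
  have hlow' : ∀ s k ω, γℓ / 2 * ((w s k ω - wstar) ⬝ᵥ P s *ᵥ (w s k ω - wstar))
      ≤ f (w s k ω) - f wstar := fun s k ω => hlow s _
  have hcontract : ∀ s, (∫ ω, f (w (s + 1) 0 ω) ∂μ) - f wstar
      ≤ ((∫ ω, f (w s 0 ω) ∂μ) - f wstar) / 2 + ε / 4 := fun s => by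
    refine gap_le_half_add_of_descent hm hη0 hγ (four_le_mul_stepSize_mul hρ hLP hσ hγ hε hη hm')
      (C := fun k => ∫ ω, (w s k ω - wstar) ⬝ᵥ P s *ᵥ (w s k ω - wstar) ∂μ)
      (V := fun k => ∫ ω, f (w s k ω) ∂μ) (c := f wstar)
      (fun k => integral_nonneg fun ω => (hP s).posSemidef.dotProduct_mulVec_nonneg _)
      (fun k _ => ?_) ?_ (hconv.integral_comp_average_le hm (hstage s) (hfint (s + 1) 0) (hfint s))
    · have hstep := integral_preconditioned_sgd_step_le (hℱ _) (hP s) hdiff hconv wstar hη0.le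
        (hadapt s k) (hgint s k) (hg2int s k) (hfint s k)
        (integrable_dotProduct_mulVec_of_mul_le (hP s).posSemidef (half_pos hγ) (hdist s k)
          (hfgap s k) (hlow' s k))
        (hupd s k) (hmean s k) (hvar s k)
      nlinarith [mul_le_mul_of_nonneg_right (stepSize_mul_le_one hLP hη)
          (mul_nonneg hη0.le (hgap s k)),
        mul_le_mul_of_nonneg_left (stepSize_mul_noise_le hρ hσ hη) hη0.le]
    · rw [← integral_sub_const (hfint s 0)]
      exact mul_integral_dotProduct_mulVec_le (hP s).posSemidef (half_pos hγ) (hdist s 0)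
        (hfgap s 0) (hlow' s 0)
  refine le_of_le_half_add_of_log_le (D := fun s => (∫ ω, f (w s 0 ω) ∂μ) - f wstar) hε
    (hgap 0 0) hcontract ?_
  simpa [hw0] using hSlog

/-- **SketchySGD strongly convex convergence (staged version).**
Let `f` be convex and differentiable with minimizer `w⋆`, `ρ, L_P, σ², γ̂_ℓ, ε > 0`.
In each stage `s` a positive definite `P⁽ˢ⁾` satisfies the preconditioned strong
convexity bound `f(w) − f(w⋆) ≥ (γ̂_ℓ/2)‖w − w⋆‖²_{P⁽ˢ⁾}`, and the inner iterates are
`w_{k+1}⁽ˢ⁾ = w_k⁽ˢ⁾ − η(P⁽ˢ⁾)⁻¹g_k⁽ˢ⁾` with conditionally unbiased `g_k⁽ˢ⁾` whose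
conditional second moment is `≤ 4L_P(f(w_k⁽ˢ⁾) − f(w⋆)) + 2σ²/ρ`; the next stage
starts at the average of the previous stage.  With `η = min{1/(4L_P), ερ/(8σ²)}`,
`m ≥ 16(L_P + 2σ²/(ερ))/γ̂_ℓ` inner iterations, and
`S ≥ 2·log(2(f(w₀) − f(w⋆))/ε)` stages, the output `ŵ⁽ˢ⁾` satisfies
`E[f(ŵ⁽ˢ⁾) − f(w⋆)] ≤ ε`. -/
theorem sketchySGD_strongly_convex_convergence {p : ℕ}
    (f : (Fin p → ℝ) → ℝ) (hdiff : Differentiable ℝ f)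
    (hconv : ConvexOn ℝ Set.univ f)
    (wstar : Fin p → ℝ) (hmin : ∀ w, f wstar ≤ f w)
    (ρ LP σ2 γℓ ε : ℝ) (hρ : 0 < ρ) (hLP : 0 < LP) (hσ : 0 < σ2)
    (hγ : 0 < γℓ) (hε : 0 < ε)
    (P : ℕ → Matrix (Fin p) (Fin p) ℝ) (hP : ∀ s, (P s).PosDef)
    (hlow : ∀ (s : ℕ) (w : Fin p → ℝ),
      f w - f wstar ≥ γℓ / 2 * ((w - wstar) ⬝ᵥ (P s).mulVec (w - wstar)))
    (m S : ℕ) (hm : 0 < m) (hS : 0 < S)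
    (hm' : (m : ℝ) ≥ 16 * (LP + 2 * σ2 / (ε * ρ)) / γℓ)
    {Ω : Type} {m0 : MeasurableSpace Ω} (μ : Measure Ω) [IsProbabilityMeasure μ]
    (ℱ : ℕ → MeasurableSpace Ω) (hℱ : ∀ t, ℱ t ≤ m0) (hℱmono : Monotone ℱ)
    (w g : ℕ → ℕ → Ω → Fin p → ℝ)
    (w0 : Fin p → ℝ) (hw0 : w 0 0 = fun _ => w0)
    (hSlog : (S : ℝ) ≥ 2 * Real.log (2 * (f w0 - f wstar) / ε))
    (hadapt : ∀ s k, StronglyMeasurable[ℱ (s * m + k)] (w s k))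
    (hgint : ∀ s k, Integrable (g s k) μ)
    (hg2int : ∀ s k,
      Integrable (fun ω => g s k ω ⬝ᵥ ((P s)⁻¹).mulVec (g s k ω)) μ)
    (hfint : ∀ s k, Integrable (fun ω => f (w s k ω)) μ)
    (η : ℝ) (hη : η = min (1 / (4 * LP)) (ε * ρ / (8 * σ2)))
    (hupd : ∀ s k ω, w s (k + 1) ω = w s k ω - η • ((P s)⁻¹).mulVec (g s k ω))
    (hstage : ∀ s ω, w (s + 1) 0 ω = (m : ℝ)⁻¹ • ∑ k ∈ Finset.range m, w s k ω)
    (hmean : ∀ s k, μ[g s k|ℱ (s * m + k)] =ᵐ[μ] fun ω => gradVec f (w s k ω))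
    (hvar : ∀ s k, ∀ᵐ ω ∂μ,
      (μ[fun ω' => g s k ω' ⬝ᵥ ((P s)⁻¹).mulVec (g s k ω')|ℱ (s * m + k)]) ω
        ≤ 4 * LP * (f (w s k ω) - f wstar) + 2 * σ2 / ρ) :
    (∫ ω, f (w S 0 ω) ∂μ) - f wstar ≤ ε :=
  sketchySGD_strongly_convex_convergence_general f hdiff hconv wstar hmin ρ LP σ2 γℓ ε hρ hLP hσ hγ
    hε P hP hlow m S hm hm' μ ℱ hℱ w g w0 hw0 hSlog hadapt hgint hg2int hfint η hη hupd hstage hmean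
    hvar
end
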